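/- arXiv:1908.07098 — 6 statements merged into one kernel-verified Lean document; each statement's English description precedes it below -/
import Mathlib

section
/- If (r, y) solves the system r'(t) = y(t) - β r(t) + β λ(t) + λ'(t), y'(t) = σ² r(t)² - 2β y(t) with r(0) = λ(0), y(0) = 0, then r satisfies the integral equation r(t) = λ(t) + (σ²/β) ∫₀ᵗ r(s)² (e^{β(s-t)} - e^{2β(s-t)}) ds. -/
open Set

/-- If (r, y) solves the system, then r satisfies the integral equation
r(t) = λ(t) + (σ²/β) ∫₀ᵗ r(s)² (e^{β(s-t)} - e^{2β(s-t)}) ds. -/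
theorem stmt2 (β σ T : ℝ) (hβ : 0 < β) (hσ : 0 < σ) (hT : 0 < T)
    (lam r y : ℝ → ℝ) (hlam : ContDiff ℝ 1 lam)
    (hr : ∀ t ∈ Ico (0:ℝ) T,
      HasDerivAt r (y t - β * r t + β * lam t + deriv lam t) t)
    (hy : ∀ t ∈ Ico (0:ℝ) T,
      HasDerivAt y (σ^2 * (r t)^2 - 2 * β * y t) t)
    (hr0 : r 0 = lam 0) (hy0 : y 0 = 0) :
    ∀ t ∈ Ico (0:ℝ) T,
      r t = lam t + σ^2 / β *
        ∫ s in (0:ℝ)..t,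
          (r s)^2 * (Real.exp (β * (s - t)) - Real.exp (2 * β * (s - t))) := by
  rintro t ⟨ht0, htT⟩
  have hsub : Icc (0:ℝ) t ⊆ Ico (0:ℝ) T := fun x hx => ⟨hx.1, lt_of_le_of_lt hx.2 htT⟩
  -- clamp function
  set c : ℝ → ℝ := fun s => max 0 (min s t) with hc
  have hc_cont : Continuous c := continuous_const.max (continuous_id.min continuous_const)
  have hc_mem : ∀ s, c s ∈ Icc (0:ℝ) t := fun s =>
    ⟨le_max_left _ _, max_le (by exact ht0) (min_le_right _ _)⟩
  have hc_eq : ∀ s ∈ Icc (0:ℝ) t, c s = s := fun s hs => by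
    simp only [hc, min_eq_left hs.2, max_eq_right hs.1]
  have hr_cont : ContinuousOn r (Icc 0 t) := fun x hx =>
    (hr x (hsub hx)).continuousAt.continuousWithinAt
  set R : ℝ → ℝ := fun s => r (c s) with hRdef
  have hR_cont : Continuous R := hr_cont.comp_continuous hc_cont hc_mem
  have hR_eq : ∀ s ∈ Icc (0:ℝ) t, R s = r s := fun s hs => by rw [hRdef]; simp [hc_eq s hs]
  -- the inner integral
  set I : ℝ → ℝ := fun x => ∫ s in (0:ℝ)..x, σ^2 * Real.exp (2*β*s) * R s ^ 2 with hIdef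
  have hInt_cont : Continuous fun s => σ^2 * Real.exp (2*β*s) * R s ^ 2 := by
    exact ((continuous_const.mul ((continuous_const.mul continuous_id).rexp)).mul
      (hR_cont.pow 2))
  have hI : ∀ x : ℝ, HasDerivAt I (σ^2 * Real.exp (2*β*x) * R x ^ 2) x := fun x =>
    (hInt_cont.integral_hasStrictDerivAt 0 x).hasDerivAt
  -- Step A: y x * exp(2βx) = I x on [0,t]
  have stepA : ∀ x ∈ Icc (0:ℝ) t, y x * Real.exp (2*β*x) = I x := by
    apply eq_of_has_deriv_right_eq
      (f' := fun x => σ^2 * Real.exp (2*β*x) * R x ^ 2)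
    · intro x hx
      have hx' : x ∈ Icc (0:ℝ) t := ⟨hx.1, le_of_lt hx.2⟩
      have hyx := hy x (hsub hx')
      have hexp : HasDerivAt (fun u => Real.exp (2*β*u)) (2*β*Real.exp (2*β*x)) x := by
        simpa [mul_comm] using (HasDerivAt.exp ((hasDerivAt_id x).const_mul (2*β)))
      have := hyx.mul hexp
      have heq : (σ^2 * (r x)^2 - 2 * β * y x) * Real.exp (2*β*x)
          + y x * (2*β*Real.exp (2*β*x)) = σ^2 * Real.exp (2*β*x) * R x ^ 2 := by
        rw [hR_eq x hx']; ring
      exact (heq ▸ this).hasDerivWithinAt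
    · intro x hx
      exact (hI x).hasDerivWithinAt
    · exact ContinuousOn.mul (fun x hx => (hy x (hsub hx)).continuousAt.continuousWithinAt)
        ((continuous_const.mul continuous_id).rexp.continuousOn)
    · exact fun x _ => (hI x).continuousAt.continuousWithinAt
    · simp [hy0, hIdef]
  -- second primitive
  set A : ℝ → ℝ := fun x => ∫ s in (0:ℝ)..x, Real.exp (β*s) * R s ^ 2 with hAdef
  have hA_cont : Continuous fun s => Real.exp (β*s) * R s ^ 2 :=
    ((continuous_const.mul continuous_id).rexp).mul (hR_cont.pow 2)
  have hA : ∀ x : ℝ, HasDerivAt A (Real.exp (β*x) * R x ^ 2) x := fun x =>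
    (hA_cont.integral_hasStrictDerivAt 0 x).hasDerivAt
  set B : ℝ → ℝ := fun x => ∫ s in (0:ℝ)..x, Real.exp (2*β*s) * R s ^ 2 with hBdef
  have hB_cont : Continuous fun s => Real.exp (2*β*s) * R s ^ 2 :=
    ((continuous_const.mul continuous_id).rexp).mul (hR_cont.pow 2)
  have hIB : ∀ x, I x = σ^2 * B x := fun x => by
    simp only [hIdef, hBdef, mul_assoc, intervalIntegral.integral_const_mul]
  have hlam' : ∀ x, HasDerivAt lam (deriv lam x) x := fun x =>
    ((hlam.differentiable one_ne_zero) x).hasDerivAt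
  have hb : (β:ℝ) ≠ 0 := ne_of_gt hβ
  -- Step B
  have stepB : ∀ x ∈ Icc (0:ℝ) t,
      Real.exp (β*x) * (r x - lam x)
        = -(1/β) * Real.exp (-(β*x)) * I x + σ^2/β * A x := by
    apply eq_of_has_deriv_right_eq (f' := fun x => Real.exp (β*x) * y x)
    · intro x hx
      have hx' : x ∈ Icc (0:ℝ) t := ⟨hx.1, le_of_lt hx.2⟩
      have hexpb : HasDerivAt (fun u => Real.exp (β*u)) (β * Real.exp (β*x)) x := by
        simpa [mul_comm] using (HasDerivAt.exp ((hasDerivAt_id x).const_mul β))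
      have hprod := hexpb.mul ((hr x (hsub hx')).sub (hlam' x))
      have heq : β * Real.exp (β*x) * (r x - lam x)
          + Real.exp (β*x) * ((y x - β * r x + β * lam x + deriv lam x) - deriv lam x)
          = Real.exp (β*x) * y x := by ring
      exact (heq ▸ hprod).hasDerivWithinAt
    · intro x hx
      have hx' : x ∈ Icc (0:ℝ) t := ⟨hx.1, le_of_lt hx.2⟩
      have hexpm : HasDerivAt (fun u => Real.exp (-(β*u))) (-β * Real.exp (-(β*x))) x := by
        simpa [mul_comm] using (HasDerivAt.exp (((hasDerivAt_id x).const_mul β).neg))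
      have h1 : HasDerivAt (fun u => -(1/β) * Real.exp (-(β*u)))
          (-(1/β) * (-β * Real.exp (-(β*x)))) x := hexpm.const_mul (-(1/β))
      have h2 := h1.mul (hI x)
      have h3 := (hA x).const_mul (σ^2/β)
      have hg := h2.add h3
      have hIx : I x = y x * Real.exp (2*β*x) := (stepA x hx').symm
      have E : Real.exp (-(β*x)) * Real.exp (2*β*x) = Real.exp (β*x) := by
        rw [← Real.exp_add]; ring_nf
      have heq : -(1/β) * (-β * Real.exp (-(β*x))) * I x
          + -(1/β) * Real.exp (-(β*x)) * (σ^2 * Real.exp (2*β*x) * R x ^ 2)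
          + σ^2/β * (Real.exp (β*x) * R x ^ 2) = Real.exp (β*x) * y x := by
        rw [hIx]
        field_simp
        linear_combination (norm := ring_nf) (β * y x - σ^2 * R x ^ 2) * E
      exact (heq ▸ hg).hasDerivWithinAt
    · exact (((continuous_const.mul continuous_id).rexp).continuousOn).mul
        (fun x hx => (((hr x (hsub hx)).continuousAt).sub
          hlam.continuous.continuousAt).continuousWithinAt)
    · intro x _
      have hexpm : HasDerivAt (fun u => Real.exp (-(β*u))) (-β * Real.exp (-(β*x))) x := by
        simpa [mul_comm] using (HasDerivAt.exp (((hasDerivAt_id x).const_mul β).neg))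
      have h1 : HasDerivAt (fun u => -(1/β) * Real.exp (-(β*u)))
          (-(1/β) * (-β * Real.exp (-(β*x)))) x := hexpm.const_mul (-(1/β))
      exact ((h1.mul (hI x)).add ((hA x).const_mul (σ^2/β))).continuousAt.continuousWithinAt
    · simp [hr0, hIdef, hAdef]
  -- conclude
  have stepBt := stepB t ⟨ht0, le_refl t⟩
  set a := Real.exp (-(β*t)) with ha
  have E3 : Real.exp (β*t) * a = 1 := by rw [ha, ← Real.exp_add]; simp
  -- rewrite the target integral
  have hcong : (∫ s in (0:ℝ)..t,
        (r s)^2 * (Real.exp (β * (s - t)) - Real.exp (2 * β * (s - t))))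
      = a * A t - a * a * B t := by
    have step1 : (∫ s in (0:ℝ)..t,
          (r s)^2 * (Real.exp (β * (s - t)) - Real.exp (2 * β * (s - t))))
        = ∫ s in (0:ℝ)..t,
            (a * (Real.exp (β*s) * R s ^ 2) - (a*a) * (Real.exp (2*β*s) * R s ^ 2)) := by
      apply intervalIntegral.integral_congr
      intro s hs
      rw [uIcc_of_le ht0] at hs
      simp only [hR_eq s hs]
      have e1 : Real.exp (β * (s - t)) = a * Real.exp (β*s) := by
        rw [ha, ← Real.exp_add]; ring_nf
      have e2 : Real.exp (2 * β * (s - t)) = (a*a) * Real.exp (2*β*s) := by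
        rw [ha, ← Real.exp_add, ← Real.exp_add]; ring_nf
      rw [e1, e2]; ring
    rw [step1, intervalIntegral.integral_sub (f := fun s => a * (Real.exp (β*s) * R s ^ 2))
        (g := fun s => (a*a) * (Real.exp (2*β*s) * R s ^ 2))
        ((continuous_const.mul hA_cont).intervalIntegrable 0 t)
        ((continuous_const.mul hB_cont).intervalIntegrable 0 t),
      intervalIntegral.integral_const_mul, intervalIntegral.integral_const_mul]
  rw [hcong]
  -- final algebra
  have h1 : a * (Real.exp (β*t) * (r t - lam t)) = r t - lam t := by
    rw [← mul_assoc, mul_comm a, E3, one_mul]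
  rw [stepBt, hIB] at h1
  linear_combination -h1
end

section
/- Suppose r : [0,∞) → ℝ is continuous, satisfies r(t) = λ(t) + (σ²/β) ∫₀ᵗ r(t-s)² (e^{-βs} - e^{-2βs}) ds, and both limits λ(∞) = lim_{t→∞} λ(t) and r(∞) = lim_{t→∞} r(t) exist (finite), with r bounded. Then r(∞) = λ(∞) + r(∞)² σ²/(2β²). -/
open Set Filter MeasureTheory Real

lemma exp_hasDeriv (b x : ℝ) (hb : b ≠ 0) :
    HasDerivAt (fun x => -Real.exp (-b * x) / b) (Real.exp (-b * x)) x := by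
  have h : HasDerivAt (fun x => -b * x) (-b) x := by
    simpa using (hasDerivAt_id x).const_mul (-b)
  have h2 := (h.exp.div_const b).neg
  have e1 : (fun x => -Real.exp (-b * x) / b) = -fun x => Real.exp (-b * x) / b := by
    funext y; simp [neg_div]
  have e2 : Real.exp (-b * x) = -(Real.exp (-b * x) * -b / b) := by
    rw [mul_neg, neg_div, neg_neg, mul_div_assoc, div_self hb, mul_one]
  rw [e1]; exact h2.congr_deriv e2.symm

lemma exp_int (b : ℝ) (hb : 0 < b) :
    ∫ s in Ioi (0:ℝ), Real.exp (-b * s) = 1 / b := by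
  have key := integral_Ioi_of_hasDerivAt_of_tendsto'
    (f := fun x => -Real.exp (-b * x) / b) (f' := fun x => Real.exp (-b * x)) (a := 0)
    (m := 0) (fun x _ => exp_hasDeriv b x hb.ne') (exp_neg_integrableOn_Ioi 0 hb) ?_
  · rw [key]; field_simp; simp
  · have hbx : Tendsto (fun x : ℝ => b * x) atTop atTop :=
      Tendsto.const_mul_atTop hb tendsto_id
    have : Tendsto (fun x : ℝ => Real.exp (-b * x)) atTop (nhds 0) := by
      rw [Real.tendsto_exp_comp_nhds_zero]
      exact (tendsto_neg_atBot_iff.2 hbx).congr (fun x => by ring)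
    simpa [neg_div, neg_mul] using (this.div_const b).neg

/-- Stationary limit: if λ(t) → λ∞ and r(t) → r∞, and r satisfies the integral
equation, then r∞ = λ∞ + r∞² σ²/(2β²). -/
theorem stmt7 (β σ lamInf rInf : ℝ) (hβ : 0 < β) (hσ : 0 < σ)
    (lam r : ℝ → ℝ) (hlam_cont : Continuous lam)
    (hr_cont : Continuous r)
    (hr_bdd : ∃ C, ∀ t ≥ (0:ℝ), |r t| ≤ C)
    (heq : ∀ t ≥ (0:ℝ), r t = lam t + σ^2 / β *
      ∫ s in (0:ℝ)..t, (r (t - s))^2 * (Real.exp (-β * s) - Real.exp (-2 * β * s)))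
    (hlam_lim : Tendsto lam atTop (nhds lamInf))
    (hr_lim : Tendsto r atTop (nhds rInf)) :
    rInf = lamInf + rInf^2 * σ^2 / (2 * β^2) := by
  obtain ⟨C, hC⟩ := hr_bdd
  set k : ℝ → ℝ := fun s => Real.exp (-β * s) - Real.exp (-2 * β * s) with hk
  have hk_nonneg : ∀ s ≥ (0:ℝ), 0 ≤ k s := by
    intro s hs
    have : (-2 * β * s) ≤ (-β * s) := by nlinarith
    simpa [hk] using Real.exp_le_exp.2 this
  have hk_cont : Continuous k := by continuity
  have h2β : (0:ℝ) < 2 * β := by linarith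
  have hk_int : IntegrableOn k (Ioi 0) := by
    have h1 := exp_neg_integrableOn_Ioi 0 hβ
    have h2 := exp_neg_integrableOn_Ioi 0 h2β
    have : IntegrableOn (fun s => Real.exp (-(2*β) * s)) (Ioi (0:ℝ)) := h2
    exact h1.sub (by simpa [neg_mul, mul_assoc] using this)
  have hk_val : ∫ s in Ioi (0:ℝ), k s = 1 / (2 * β) := by
    have h1 := exp_int β hβ
    have h2 := exp_int (2*β) h2β
    have : ∫ s in Ioi (0:ℝ), k s
        = (∫ s in Ioi (0:ℝ), Real.exp (-β * s)) - ∫ s in Ioi (0:ℝ), Real.exp (-(2*β) * s) := by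
      rw [← integral_sub (exp_neg_integrableOn_Ioi 0 hβ) (exp_neg_integrableOn_Ioi 0 h2β)]
      simp [hk, neg_mul, mul_assoc]
    rw [this, h1, h2]
    field_simp
    ring
  have hC0 : 0 ≤ C := le_trans (abs_nonneg _) (hC 0 le_rfl)
  -- the family
  set F : ℝ → ℝ → ℝ := fun t s => (Ioc (0:ℝ) t).indicator (fun s => (r (t - s))^2 * k s) s with hF
  -- interval integral equals integral of F t over Ioi 0
  have hgF : ∀ t ≥ (0:ℝ), (∫ s in (0:ℝ)..t, (r (t - s))^2 * k s) = ∫ s in Ioi (0:ℝ), F t s := by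
    intro t ht
    rw [intervalIntegral.integral_of_le ht, hF]
    rw [← integral_indicator measurableSet_Ioc, ← integral_indicator measurableSet_Ioi]
    congr 1
    rw [Set.indicator_indicator, Set.inter_eq_self_of_subset_right Ioc_subset_Ioi_self]
  -- dominated convergence
  have hmain : Tendsto (fun t => ∫ s in Ioi (0:ℝ), F t s) atTop
      (nhds (∫ s in Ioi (0:ℝ), rInf^2 * k s)) := by
    apply tendsto_integral_filter_of_dominated_convergence (fun s => C^2 * k s)
    · filter_upwards with t
      apply AEStronglyMeasurable.indicator _ measurableSet_Ioc
      exact ((hr_cont.comp (continuous_const.sub continuous_id)).pow 2 |>.mul hk_cont).aestronglyMeasurable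
    · filter_upwards [eventually_ge_atTop (0:ℝ)] with t ht
      rw [ae_restrict_iff' measurableSet_Ioi]
      filter_upwards with s hs
      simp only [hF]
      by_cases h : s ∈ Ioc (0:ℝ) t
      · rw [Set.indicator_of_mem h]
        have h1 : 0 ≤ t - s := by linarith [h.2]
        have h2 : |r (t - s)| ≤ C := hC _ h1
        have h3 : 0 ≤ k s := hk_nonneg s (le_of_lt hs)
        rw [Real.norm_eq_abs, abs_mul, abs_of_nonneg h3]
        apply mul_le_mul _ le_rfl h3 (by positivity)
        calc |r (t - s) ^ 2| = |r (t - s)| ^ 2 := abs_pow _ _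
          _ ≤ C ^ 2 := pow_le_pow_left₀ (abs_nonneg _) h2 2
      · rw [Set.indicator_of_notMem h]
        have h3 : 0 ≤ k s := hk_nonneg s (le_of_lt hs)
        simp ; positivity
    · exact hk_int.const_mul _
    · rw [ae_restrict_iff' measurableSet_Ioi]
      filter_upwards with s hs
      have hts : Tendsto (fun t : ℝ => t - s) atTop atTop := tendsto_atTop_add_const_right _ _ tendsto_id
      have h1 : Tendsto (fun t => (r (t - s))^2 * k s) atTop (nhds (rInf^2 * k s)) :=
        (((hr_lim.comp hts).pow 2).mul_const _)
      apply h1.congr'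
      filter_upwards [eventually_ge_atTop s] with t ht
      simp only [hF]
      rw [Set.indicator_of_mem (show s ∈ Ioc (0:ℝ) t from ⟨hs, ht⟩)]
  have hlim_val : (∫ s in Ioi (0:ℝ), rInf^2 * k s) = rInf^2 / (2 * β) := by
    rw [integral_const_mul, hk_val]; ring
  -- conclude
  have hdiff : Tendsto (fun t => r t - lam t) atTop (nhds (rInf - lamInf)) := hr_lim.sub hlam_lim
  have hdiff2 : Tendsto (fun t => r t - lam t) atTop (nhds (σ^2 / β * (rInf^2 / (2*β)))) := by
    have h2 : Tendsto (fun t => σ^2 / β * ∫ s in Ioi (0:ℝ), F t s) atTop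
        (nhds (σ^2 / β * (rInf^2 / (2*β)))) := by
      rw [← hlim_val]; exact hmain.const_mul _
    apply h2.congr'
    filter_upwards [eventually_ge_atTop (0:ℝ)] with t ht
    have h1 := hgF t ht
    simp only [hk, hF] at h1 ⊢
    rw [heq t ht, ← h1]
    ring
  have := tendsto_nhds_unique hdiff hdiff2
  have hβ2 : (β:ℝ) ≠ 0 := hβ.ne'
  field_simp at this ⊢
  nlinarith [this]
end

section
/- For β² > 2λ₀σ², the Jacobian matrix [[-β, 1], [2σ²rᵢ, -2β]] of the vector field (y - βr + βλ₀, σ²r² - 2βy) at the fixed point with r-coordinate rᵢ = (β²/σ²)(1 ∓ √Δ) has eigenvalues (1/2)(-3β ± 3β√(1 ∓ (8/9)√Δ)), where Δ = 1 - 2λ₀σ²/β². Consequently, at r₁ = (β²/σ²)(1 - √Δ) both eigenvalues are real and negative (attracting fixed point), while at r₂ = (β²/σ²)(1 + √Δ) one eigenvalue is positive and one is negative (saddle point). -/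
open Matrix

set_option maxHeartbeats 1000000 in
/-- Eigenvalues of the Jacobian [[-β,1],[2σ²rᵢ,-2β]] at the two fixed points:
(1/2)(-3β ± 3β√(1 ∓ (8/9)√Δ)); at r₁ both negative (attracting), at r₂ one
positive and one negative (saddle). -/
theorem stmt9 (β σ lam0 : ℝ) (hβ : 0 < β) (hσ : 0 < σ) (hlam0 : 0 < lam0)
    (hcond : β^2 > 2 * lam0 * σ^2) :
    (∀ μ : ℝ,
      (!![-β - μ, 1; 2 * σ^2 * (β^2 / σ^2 * (1 - Real.sqrt (1 - 2 * lam0 * σ^2 / β^2))),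
          -2 * β - μ] : Matrix (Fin 2) (Fin 2) ℝ).det = 0 ↔
        μ = 1/2 * (-3 * β + 3 * β * Real.sqrt (1 - 8/9 * Real.sqrt (1 - 2 * lam0 * σ^2 / β^2))) ∨
        μ = 1/2 * (-3 * β - 3 * β * Real.sqrt (1 - 8/9 * Real.sqrt (1 - 2 * lam0 * σ^2 / β^2)))) ∧
    (1/2 * (-3 * β + 3 * β * Real.sqrt (1 - 8/9 * Real.sqrt (1 - 2 * lam0 * σ^2 / β^2))) < 0 ∧
     1/2 * (-3 * β - 3 * β * Real.sqrt (1 - 8/9 * Real.sqrt (1 - 2 * lam0 * σ^2 / β^2))) < 0) ∧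
    (∀ μ : ℝ,
      (!![-β - μ, 1; 2 * σ^2 * (β^2 / σ^2 * (1 + Real.sqrt (1 - 2 * lam0 * σ^2 / β^2))),
          -2 * β - μ] : Matrix (Fin 2) (Fin 2) ℝ).det = 0 ↔
        μ = 1/2 * (-3 * β + 3 * β * Real.sqrt (1 + 8/9 * Real.sqrt (1 - 2 * lam0 * σ^2 / β^2))) ∨
        μ = 1/2 * (-3 * β - 3 * β * Real.sqrt (1 + 8/9 * Real.sqrt (1 - 2 * lam0 * σ^2 / β^2)))) ∧
    (0 < 1/2 * (-3 * β + 3 * β * Real.sqrt (1 + 8/9 * Real.sqrt (1 - 2 * lam0 * σ^2 / β^2))) ∧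
     1/2 * (-3 * β - 3 * β * Real.sqrt (1 + 8/9 * Real.sqrt (1 - 2 * lam0 * σ^2 / β^2))) < 0) := by
  have hβ2 : (0:ℝ) < β^2 := by positivity
  have hss : σ^2 * (β^2 / σ^2) = β^2 := by field_simp
  set Δ : ℝ := 1 - 2 * lam0 * σ^2 / β^2 with hΔdef
  have hΔpos : 0 < Δ := by
    have : 2 * lam0 * σ^2 / β^2 < 1 := by
      rw [div_lt_one hβ2]; linarith
    simp only [hΔdef]; linarith
  have hΔlt : Δ < 1 := by
    have h0 : 0 < 2 * lam0 * σ^2 / β^2 := by positivity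
    simp only [hΔdef]; linarith
  set s : ℝ := Real.sqrt Δ with hsdef
  have hs0 : 0 < s := Real.sqrt_pos.mpr hΔpos
  have hs1 : s < 1 := by
    nlinarith [Real.sq_sqrt hΔpos.le, Real.sqrt_nonneg Δ]
  set t1 : ℝ := Real.sqrt (1 - 8/9 * s) with ht1def
  set t2 : ℝ := Real.sqrt (1 + 8/9 * s) with ht2def
  have ht1sq : t1^2 = 1 - 8/9 * s := Real.sq_sqrt (by nlinarith)
  have ht2sq : t2^2 = 1 + 8/9 * s := Real.sq_sqrt (by nlinarith)
  have ht1n : 0 ≤ t1 := Real.sqrt_nonneg _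
  have ht2n : 0 ≤ t2 := Real.sqrt_nonneg _
  have ht1lo : 1/3 < t1 := by nlinarith
  have ht1hi : t1 < 1 := by nlinarith
  have ht2lo : 1 < t2 := by nlinarith
  refine ⟨?_, ⟨?_, ?_⟩, ?_, ?_, ?_⟩
  · intro μ
    rw [Matrix.det_fin_two_of]
    have hkey : (-β - μ) * (-2 * β - μ) - 1 * (2 * σ^2 * (β^2 / σ^2 * (1 - s)))
        = (μ - 1/2 * (-3 * β + 3 * β * t1)) * (μ - 1/2 * (-3 * β - 3 * β * t1)) := by
      linear_combination (-2*(1-s)) * hss + (9*β^2/4) * ht1sq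
    rw [hkey, mul_eq_zero, sub_eq_zero, sub_eq_zero]
  · nlinarith [mul_lt_mul_of_pos_left ht1hi hβ]
  · nlinarith [mul_nonneg hβ.le ht1n]
  · intro μ
    rw [Matrix.det_fin_two_of]
    have hkey : (-β - μ) * (-2 * β - μ) - 1 * (2 * σ^2 * (β^2 / σ^2 * (1 + s)))
        = (μ - 1/2 * (-3 * β + 3 * β * t2)) * (μ - 1/2 * (-3 * β - 3 * β * t2)) := by
      linear_combination (-2*(1+s)) * hss + (9*β^2/4) * ht2sq
    rw [hkey, mul_eq_zero, sub_eq_zero, sub_eq_zero]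
  · nlinarith [mul_lt_mul_of_pos_left ht2lo hβ]
  · nlinarith [mul_lt_mul_of_pos_left ht2lo hβ]
end

section
/- Suppose r : [0,T) → ℝ is C² and satisfies r''(t) + 3β r'(t) + 2β² r(t) ≥ σ² r(t)² + 2β² λ₀ with r(0) = λ₀ and r'(0) = 0, and suppose R : [0,T) → ℝ is the C² solution of the corresponding equality R'' + 3βR' + 2β²R = σ²R² + 2β²λ₀ with R(0) = λ₀, R'(0) = 0. Then r(t) ≥ R(t) for all t ∈ [0,T). -/
open Set

/-- If `f` has a minimum on `[0, t₀]` at the right endpoint `t₀ > 0`,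
then its derivative there is nonpositive. -/
lemma deriv_nonpos_of_isMinOn_right (f : ℝ → ℝ) (d t₀ : ℝ) (ht₀ : 0 < t₀)
    (hd : HasDerivAt f d t₀) (hmin : ∀ t ∈ Icc (0:ℝ) t₀, f t₀ ≤ f t) : d ≤ 0 := by
  have hy : (0:ℝ) - t₀ ∈ posTangentConeAt (Icc (0:ℝ) t₀) t₀ := by
    apply sub_mem_posTangentConeAt_of_segment_subset
    rw [segment_symm, segment_eq_Icc ht₀.le]
  have hmin' : IsLocalMinOn f (Icc (0:ℝ) t₀) t₀ := IsMinOn.localize (fun t ht => hmin t ht)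
  have h := hmin'.hasFDerivWithinAt_nonneg hd.hasFDerivAt.hasFDerivWithinAt hy
  simp only [ContinuousLinearMap.smulRight_apply, ContinuousLinearMap.one_apply,
    ContinuousLinearMap.toSpanSingleton_apply, smul_eq_mul, zero_sub] at h
  nlinarith

set_option maxHeartbeats 1000000 in
/-- Core comparison lemma: if `u'' + 3βu' + 2β²u ≥ c u` with `0 ≤ c ≤ C` and zero
initial conditions, then `u ≥ 0`. -/
lemma key_nonneg (β : ℝ) (hβ : 0 ≤ β) (s : ℝ)
    (u u' u'' c : ℝ → ℝ)
    (hu : ∀ t ∈ Icc (0:ℝ) s, HasDerivAt u (u' t) t)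
    (hu' : ∀ t ∈ Icc (0:ℝ) s, HasDerivAt u' (u'' t) t)
    (hc : ∀ t ∈ Icc (0:ℝ) s, 0 ≤ c t)
    (C : ℝ) (hcb : ∀ t ∈ Icc (0:ℝ) s, c t ≤ C)
    (hineq : ∀ t ∈ Icc (0:ℝ) s, c t * u t ≤ u'' t + 3*β*u' t + 2*β^2*u t)
    (h0 : u 0 = 0) (h0' : u' 0 = 0) :
    ∀ t ∈ Icc (0:ℝ) s, 0 ≤ u t := by
  set K : ℝ := Real.exp (β*s) + max C 0 + 1 with hKdef
  have main : ∀ δ : ℝ, 0 < δ → ∀ t ∈ Icc (0:ℝ) s,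
      0 < Real.exp (2*β*t) * u t + δ * Real.exp (K*t) ∧
      0 < Real.exp (β*t) * (u' t + 2*β*u t) + δ * Real.exp (K*t) := by
    intro δ hδ
    set P : ℝ → ℝ := fun x => Real.exp (2*β*x) * u x + δ * Real.exp (K*x) with hPdef
    set W : ℝ → ℝ := fun x => Real.exp (β*x) * (u' x + 2*β*u x) + δ * Real.exp (K*x)
      with hWdef
    have hPd : ∀ x ∈ Icc (0:ℝ) s, HasDerivAt P
        (2*β*(Real.exp (2*β*x) * u x) + Real.exp (2*β*x) * u' x + δ*(K*Real.exp (K*x))) x := by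
      intro x hx
      have h1 : HasDerivAt (fun y : ℝ => 2*β*y) (2*β) x := by
        simpa using (hasDerivAt_id x).const_mul (2*β)
      have h2 : HasDerivAt (fun y : ℝ => Real.exp (2*β*y)) (Real.exp (2*β*x) * (2*β)) x := h1.exp
      have h3 : HasDerivAt (fun y : ℝ => K*y) K x := by
        simpa using (hasDerivAt_id x).const_mul K
      have h4 : HasDerivAt (fun y : ℝ => Real.exp (K*y)) (Real.exp (K*x) * K) x := h3.exp
      have := (h2.mul (hu x hx)).add (h4.const_mul δ)
      refine this.congr_deriv ?_
      ring
    have hWd : ∀ x ∈ Icc (0:ℝ) s, HasDerivAt W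
        (Real.exp (β*x) * (u'' x + 3*β*u' x + 2*β^2*u x) + δ*(K*Real.exp (K*x))) x := by
      intro x hx
      have h1 : HasDerivAt (fun y : ℝ => β*y) β x := by
        simpa using (hasDerivAt_id x).const_mul β
      have h2 : HasDerivAt (fun y : ℝ => Real.exp (β*y)) (Real.exp (β*x) * β) x := h1.exp
      have h3 : HasDerivAt (fun y : ℝ => K*y) K x := by
        simpa using (hasDerivAt_id x).const_mul K
      have h4 : HasDerivAt (fun y : ℝ => Real.exp (K*y)) (Real.exp (K*x) * K) x := h3.exp
      have hin : HasDerivAt (fun y => u' y + 2*β*u y) (u'' x + 2*β*u' x) x :=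
        (hu' x hx).add ((hu x hx).const_mul (2*β))
      have := (h2.mul hin).add (h4.const_mul δ)
      refine this.congr_deriv ?_
      ring
    by_contra hcon
    push_neg at hcon
    obtain ⟨t₁, ht₁, hbad⟩ := hcon
    set S : Set ℝ := {x | x ∈ Icc (0:ℝ) s ∧ (P x ≤ 0 ∨ W x ≤ 0)} with hSdef
    have hPc : ContinuousOn P (Icc (0:ℝ) s) :=
      fun x hx => ((hPd x hx).continuousAt).continuousWithinAt
    have hWc : ContinuousOn W (Icc (0:ℝ) s) :=
      fun x hx => ((hWd x hx).continuousAt).continuousWithinAt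
    have hScl : IsClosed S := by
      have : S = (Icc (0:ℝ) s ∩ P⁻¹' (Iic 0)) ∪ (Icc (0:ℝ) s ∩ W⁻¹' (Iic 0)) := by
        ext x
        simp only [hSdef, mem_setOf_eq, mem_union, mem_inter_iff, mem_preimage, mem_Iic]
        tauto
      rw [this]
      exact (hPc.preimage_isClosed_of_isClosed isClosed_Icc isClosed_Iic).union
        (hWc.preimage_isClosed_of_isClosed isClosed_Icc isClosed_Iic)
    have hSne : S.Nonempty := by
      rcases le_or_gt (P t₁) 0 with h | h
      · exact ⟨t₁, ht₁, Or.inl h⟩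
      · exact ⟨t₁, ht₁, Or.inr (hbad h)⟩
    have hSbdd : BddBelow S := ⟨0, fun x hx => hx.1.1⟩
    set t₀ := sInf S with ht₀def
    have ht₀S : t₀ ∈ S := hScl.csInf_mem hSne hSbdd
    have ht₀Icc : t₀ ∈ Icc (0:ℝ) s := ht₀S.1
    have hP0 : P 0 = δ := by simp [hPdef, h0]
    have hW0 : W 0 = δ := by simp [hWdef, h0, h0']
    have ht₀pos : 0 < t₀ := by
      rcases eq_or_lt_of_le ht₀Icc.1 with h | h
      · exfalso
        rcases ht₀S.2 with hc1 | hc1 <;> rw [← h] at hc1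
        · rw [hP0] at hc1; linarith
        · rw [hW0] at hc1; linarith
      · exact h
    have hlt : ∀ x, 0 ≤ x → x < t₀ → 0 < P x ∧ 0 < W x := by
      intro x hx0 hxt
      by_contra hcc
      push_neg at hcc
      have hxS : x ∈ S := by
        refine ⟨⟨hx0, le_trans hxt.le ht₀Icc.2⟩, ?_⟩
        rcases le_or_gt (P x) 0 with h | h
        · exact Or.inl h
        · exact Or.inr (hcc h)
      exact absurd (csInf_le hSbdd hxS) (not_le.mpr hxt)
    have hmemIoo : Ioo (0:ℝ) t₀ ∈ nhdsWithin t₀ (Iio t₀) :=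
      Ioo_mem_nhdsLT_of_mem ⟨ht₀pos, le_refl _⟩
    have hPt₀ : 0 ≤ P t₀ := by
      have htd : Filter.Tendsto P (nhdsWithin t₀ (Iio t₀)) (nhds (P t₀)) :=
        ((hPd t₀ ht₀Icc).continuousAt).continuousWithinAt
      refine ge_of_tendsto htd ?_
      filter_upwards [hmemIoo] with x hx
      exact (hlt x hx.1.le hx.2).1.le
    have hWt₀ : 0 ≤ W t₀ := by
      have htd : Filter.Tendsto W (nhdsWithin t₀ (Iio t₀)) (nhds (W t₀)) :=
        ((hWd t₀ ht₀Icc).continuousAt).continuousWithinAt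
      refine ge_of_tendsto htd ?_
      filter_upwards [hmemIoo] with x hx
      exact (hlt x hx.1.le hx.2).2.le
    -- common facts
    have hE1pos : 0 < Real.exp (β*t₀) := Real.exp_pos _
    have hEKpos : 0 < Real.exp (K*t₀) := Real.exp_pos _
    have hE1le : Real.exp (β*t₀) ≤ Real.exp (β*s) :=
      Real.exp_le_exp.mpr (mul_le_mul_of_nonneg_left ht₀Icc.2 hβ)
    have hE1ge1 : 1 ≤ Real.exp (β*t₀) :=
      Real.one_le_exp (mul_nonneg hβ ht₀Icc.1)
    have hCmax0 : (0:ℝ) ≤ max C 0 := le_max_right C 0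
    have he2 : Real.exp (2*β*t₀) = Real.exp (β*t₀) * Real.exp (β*t₀) := by
      rw [← Real.exp_add]; ring_nf
    rcases ht₀S.2 with hPle | hWle
    · -- P hits zero first
      have hPeq : P t₀ = 0 := le_antisymm hPle hPt₀
      have hmin : ∀ x ∈ Icc (0:ℝ) t₀, P t₀ ≤ P x := by
        intro x hx
        rcases eq_or_lt_of_le hx.2 with h | h
        · rw [h]
        · rw [hPeq]; exact (hlt x hx.1 h).1.le
      have hd := deriv_nonpos_of_isMinOn_right P _ t₀ ht₀pos (hPd t₀ ht₀Icc) hmin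
      have hPeq' : Real.exp (2*β*t₀) * u t₀ + δ * Real.exp (K*t₀) = 0 := by
        rw [hPdef] at hPeq; exact hPeq
      have hWt₀' : 0 ≤ Real.exp (β*t₀) * (u' t₀ + 2*β*u t₀) + δ * Real.exp (K*t₀) := by
        rw [hWdef] at hWt₀; exact hWt₀
      have hKgt : Real.exp (β*t₀) < K := by
        rw [hKdef]; linarith
      rw [he2] at hd hPeq'
      nlinarith [mul_nonneg hE1pos.le hWt₀',
        mul_pos hδ (mul_pos hEKpos (sub_pos.mpr hKgt))]
    · -- W hits zero first
      have hWeq : W t₀ = 0 := le_antisymm hWle hWt₀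
      have hmin : ∀ x ∈ Icc (0:ℝ) t₀, W t₀ ≤ W x := by
        intro x hx
        rcases eq_or_lt_of_le hx.2 with h | h
        · rw [h]
        · rw [hWeq]; exact (hlt x hx.1 h).2.le
      have hd := deriv_nonpos_of_isMinOn_right W _ t₀ ht₀pos (hWd t₀ ht₀Icc) hmin
      have hPt₀' : 0 ≤ Real.exp (2*β*t₀) * u t₀ + δ * Real.exp (K*t₀) := by
        rw [hPdef] at hPt₀; exact hPt₀
      have hc0 := hc t₀ ht₀Icc
      have hcC' : c t₀ ≤ max C 0 := le_trans (hcb t₀ ht₀Icc) (le_max_left C 0)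
      -- E1 * (c * u) ≥ -(max C 0 * (δ * EK))
      have hstep : -((max C 0) * (δ * Real.exp (K*t₀))) ≤
          Real.exp (β*t₀) * (c t₀ * u t₀) := by
        have hA : -(δ * Real.exp (K*t₀)) ≤
            Real.exp (β*t₀) * Real.exp (β*t₀) * u t₀ := by
          rw [← he2]; linarith
        have hB : c t₀ * (-(δ * Real.exp (K*t₀))) ≤
            c t₀ * (Real.exp (β*t₀) * Real.exp (β*t₀) * u t₀) :=
          mul_le_mul_of_nonneg_left hA hc0
        have hC2 : -((max C 0) * (δ * Real.exp (K*t₀))) ≤ c t₀ * (-(δ * Real.exp (K*t₀))) := by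
          have := mul_le_mul_of_nonneg_right hcC' (mul_pos hδ hEKpos).le
          linarith
        have hyE : -((max C 0) * (δ * Real.exp (K*t₀))) ≤
            (Real.exp (β*t₀) * (c t₀ * u t₀)) * Real.exp (β*t₀) := by
          calc -((max C 0) * (δ * Real.exp (K*t₀)))
              ≤ c t₀ * (Real.exp (β*t₀) * Real.exp (β*t₀) * u t₀) := le_trans hC2 hB
            _ = (Real.exp (β*t₀) * (c t₀ * u t₀)) * Real.exp (β*t₀) := by ring
        rcases le_or_gt 0 (Real.exp (β*t₀) * (c t₀ * u t₀)) with hy | hy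
        · have := mul_nonneg hCmax0 (mul_pos hδ hEKpos).le
          linarith
        · have h2 : (Real.exp (β*t₀) * (c t₀ * u t₀)) * Real.exp (β*t₀) ≤
              (Real.exp (β*t₀) * (c t₀ * u t₀)) * 1 :=
            mul_le_mul_of_nonpos_left hE1ge1 hy.le
          have h3 : (Real.exp (β*t₀) * (c t₀ * u t₀)) * 1 =
              Real.exp (β*t₀) * (c t₀ * u t₀) := mul_one _
          linarith
      have hineq' := hineq t₀ ht₀Icc
      have hmul : Real.exp (β*t₀) * (c t₀ * u t₀) ≤
          Real.exp (β*t₀) * (u'' t₀ + 3*β*u' t₀ + 2*β^2*u t₀) :=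
        mul_le_mul_of_nonneg_left hineq' hE1pos.le
      have hKgt : max C 0 < K := by
        rw [hKdef]; linarith [Real.exp_pos (β*s)]
      have hfin := mul_pos hδ (mul_pos hEKpos (sub_pos.mpr hKgt))
      nlinarith [hfin, hd, hmul, hstep]
  -- conclude: let δ → 0
  intro t ht
  by_contra hneg
  push_neg at hneg
  set δ : ℝ := -(Real.exp (2*β*t) * u t) / Real.exp (K*t) with hδdef
  have hδpos : 0 < δ := by
    apply div_pos _ (Real.exp_pos _)
    nlinarith [Real.exp_pos (2*β*t)]
  have h1 := (main δ hδpos t ht).1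
  have h2 : Real.exp (2*β*t) * u t + δ * Real.exp (K*t) = 0 := by
    rw [hδdef]
    field_simp
    ring
  linarith

/-- Comparison: solutions of the differential inequality
r'' + 3βr' + 2β²r ≥ σ²r² + 2β²λ₀ dominate the solution of the equality
with the same initial conditions. -/
theorem stmt14 (β σ lam0 T : ℝ) (hβ : 0 ≤ β) (hσ : 0 < σ) (hlam0 : 0 < lam0)
    (hT : 0 < T) (r r' r'' R R' R'' : ℝ → ℝ)
    (hr : ∀ t ∈ Ico (0:ℝ) T, HasDerivAt r (r' t) t)
    (hr' : ∀ t ∈ Ico (0:ℝ) T, HasDerivAt r' (r'' t) t)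
    (hR : ∀ t ∈ Ico (0:ℝ) T, HasDerivAt R (R' t) t)
    (hR' : ∀ t ∈ Ico (0:ℝ) T, HasDerivAt R' (R'' t) t)
    (hineq : ∀ t ∈ Ico (0:ℝ) T,
      r'' t + 3 * β * r' t + 2 * β^2 * r t ≥ σ^2 * (r t)^2 + 2 * β^2 * lam0)
    (heq : ∀ t ∈ Ico (0:ℝ) T,
      R'' t + 3 * β * R' t + 2 * β^2 * R t = σ^2 * (R t)^2 + 2 * β^2 * lam0)
    (hr0 : r 0 = lam0) (hr'0 : r' 0 = 0) (hR0 : R 0 = lam0) (hR'0 : R' 0 = 0) :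
    ∀ t ∈ Ico (0:ℝ) T, r t ≥ R t := by
  intro t ht
  obtain ⟨ht0, htT⟩ := ht
  have hsub : Icc (0:ℝ) t ⊆ Ico (0:ℝ) T := fun x hx => ⟨hx.1, lt_of_le_of_lt hx.2 htT⟩
  -- Step 1: r ≥ lam0 on [0, t]
  have hrge := key_nonneg β hβ t (fun x => r x - lam0) r' r'' (fun _ => 0)
    (fun x hx => (hr x (hsub hx)).sub_const lam0)
    (fun x hx => hr' x (hsub hx))
    (fun x hx => le_refl 0)
    0 (fun x hx => le_refl 0)
    (fun x hx => by
      have h := hineq x (hsub hx)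
      beta_reduce
      nlinarith [sq_nonneg (σ * r x)])
    (by simp [hr0]) hr'0
  -- Step 2: R ≥ lam0 on [0, t]
  have hRge := key_nonneg β hβ t (fun x => R x - lam0) R' R'' (fun _ => 0)
    (fun x hx => (hR x (hsub hx)).sub_const lam0)
    (fun x hx => hR' x (hsub hx))
    (fun x hx => le_refl 0)
    0 (fun x hx => le_refl 0)
    (fun x hx => by
      have h := heq x (hsub hx)
      beta_reduce
      nlinarith [sq_nonneg (σ * R x)])
    (by simp [hR0]) hR'0
  -- bound for the coefficient
  have hcont : ContinuousOn (fun x => σ^2 * (r x + R x)) (Icc (0:ℝ) t) := by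
    apply ContinuousOn.mul continuousOn_const
    exact ContinuousOn.add (fun x hx => (hr x (hsub hx)).continuousAt.continuousWithinAt)
      (fun x hx => (hR x (hsub hx)).continuousAt.continuousWithinAt)
  obtain ⟨C, hC⟩ := isCompact_Icc.exists_bound_of_continuousOn hcont
  -- Step 3: comparison
  have hfinal := key_nonneg β hβ t (fun x => r x - R x) (fun x => r' x - R' x)
    (fun x => r'' x - R'' x) (fun x => σ^2 * (r x + R x))
    (fun x hx => (hr x (hsub hx)).sub (hR x (hsub hx)))
    (fun x hx => (hr' x (hsub hx)).sub (hR' x (hsub hx)))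
    (fun x hx => by
      have h1 := hrge x hx
      have h2 := hRge x hx
      have h3 : 0 ≤ r x + R x := by linarith
      exact mul_nonneg (sq_nonneg σ) h3)
    C
    (fun x hx => by
      have hb := hC x hx
      rw [Real.norm_eq_abs] at hb
      exact le_trans (le_abs_self _) hb)
    (fun x hx => by
      have h1 := hineq x (hsub hx)
      have h2 := heq x (hsub hx)
      beta_reduce
      nlinarith)
    (by simp [hr0, hR0]) (by simp [hr'0, hR'0])
  have h := hfinal t ⟨ht0, le_refl t⟩
  linarith
end

section
/- Let F : [0,T] → ℝ be continuous and nonnegative, and let ε : [0,T] → ℝ be continuous with ε(t) ≥ ∫₀ᵗ (t-s) F(s) ε(s) ds for all t ∈ [0,T]. Then ε(t) ≥ 0 for all t ∈ [0,T]. -/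
open Set Filter Topology

/-- Generalized Gronwall inequality with kernel (t-s)F(s): if F ≥ 0 is
continuous and ε(t) ≥ ∫₀ᵗ (t-s)F(s)ε(s) ds then ε ≥ 0. -/
theorem stmt15 (T : ℝ) (hT : 0 ≤ T) (F ε : ℝ → ℝ)
    (hF_cont : ContinuousOn F (Icc 0 T))
    (hF_nonneg : ∀ s ∈ Icc (0:ℝ) T, 0 ≤ F s)
    (hε_cont : ContinuousOn ε (Icc 0 T))
    (hineq : ∀ t ∈ Icc (0:ℝ) T, ε t ≥ ∫ s in (0:ℝ)..t, (t - s) * F s * ε s) :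
    ∀ t ∈ Icc (0:ℝ) T, 0 ≤ ε t := by
  obtain ⟨K₀, hK₀⟩ := (isCompact_Icc (a := (0:ℝ)) (b := T)).exists_bound_of_continuousOn hF_cont
  obtain ⟨M₀, hM₀⟩ := (isCompact_Icc (a := (0:ℝ)) (b := T)).exists_bound_of_continuousOn hε_cont
  set K := max K₀ 0 with hKdef
  set M := max M₀ 0 with hMdef
  have hKnn : 0 ≤ K := le_max_right _ _
  have hMnn : 0 ≤ M := le_max_right _ _
  have hFK : ∀ s ∈ Icc (0:ℝ) T, F s ≤ K := fun s hs =>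
    le_trans (le_abs_self _) (le_trans (hK₀ s hs) (le_max_left _ _))
  have hεM : ∀ s ∈ Icc (0:ℝ) T, -M ≤ ε s := by
    intro s hs
    have h := (abs_le.mp (hM₀ s hs)).1
    have : -M ≤ -M₀ := neg_le_neg (le_max_left _ _)
    linarith
  have key : ∀ n : ℕ, ∀ t ∈ Icc (0:ℝ) T,
      -(M * (T * K) ^ n * t ^ n / n.factorial) ≤ ε t := by
    intro n
    induction n with
    | zero => intro t ht; simpa using hεM t ht
    | succ n ih =>
      intro t ht
      have ht0 : (0:ℝ) ≤ t := ht.1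
      have htT : t ≤ T := ht.2
      have hsub : Icc (0:ℝ) t ⊆ Icc 0 T := Icc_subset_Icc le_rfl htT
      have hint1 : IntervalIntegrable (fun s => (t - s) * F s * ε s) MeasureTheory.volume 0 t := by
        apply ContinuousOn.intervalIntegrable
        rw [uIcc_of_le ht0]
        exact (((continuousOn_const.sub continuousOn_id).mul (hF_cont.mono hsub)).mul
          (hε_cont.mono hsub))
      have hint2 : IntervalIntegrable
          (fun s => (-(T * K * M * (T * K) ^ n / n.factorial)) * s ^ n)
          MeasureTheory.volume 0 t := by
        apply Continuous.intervalIntegrable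
        continuity
      have hmono : ∫ s in (0:ℝ)..t, (-(T * K * M * (T * K) ^ n / n.factorial)) * s ^ n
          ≤ ∫ s in (0:ℝ)..t, (t - s) * F s * ε s := by
        apply intervalIntegral.integral_mono_on ht0 hint2 hint1
        intro s hs
        have hs0 : 0 ≤ s := hs.1
        have hsT : s ∈ Icc (0:ℝ) T := hsub hs
        have hcnn : 0 ≤ M * (T * K) ^ n * s ^ n / n.factorial := by positivity
        have h1 : -(M * (T * K) ^ n * s ^ n / n.factorial) ≤ ε s := ih s hsT
        have hts : 0 ≤ t - s := by linarith [hs.2]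
        have hFs : 0 ≤ F s := hF_nonneg s hsT
        have h2 : (t - s) * F s * (-(M * (T * K) ^ n * s ^ n / n.factorial))
            ≤ (t - s) * F s * ε s :=
          mul_le_mul_of_nonneg_left h1 (by positivity)
        refine le_trans ?_ h2
        have h3 : (t - s) * F s ≤ T * K := by
          have h4 : t - s ≤ T := by linarith
          exact mul_le_mul h4 (hFK s hsT) hFs hT
        have h5 : ((t - s) * F s) * (M * (T * K) ^ n * s ^ n / n.factorial)
            ≤ (T * K) * (M * (T * K) ^ n * s ^ n / n.factorial) :=
          mul_le_mul_of_nonneg_right h3 hcnn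
        have h6 : (-(T * K * M * (T * K) ^ n / n.factorial)) * s ^ n
            = -((T * K) * (M * (T * K) ^ n * s ^ n / n.factorial)) := by ring
        have h7 : (t - s) * F s * (-(M * (T * K) ^ n * s ^ n / n.factorial))
            = -(((t - s) * F s) * (M * (T * K) ^ n * s ^ n / n.factorial)) := by ring
        rw [h6, h7]
        linarith [h5]
      have hcalc : ∫ s in (0:ℝ)..t, (-(T * K * M * (T * K) ^ n / n.factorial)) * s ^ n
          = -(M * (T * K) ^ (n + 1) * t ^ (n + 1) / (n + 1).factorial) := by
        rw [intervalIntegral.integral_const_mul, integral_pow]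
        have hfac : (n.factorial : ℝ) ≠ 0 := by positivity
        rw [Nat.factorial_succ]
        push_cast
        field_simp
        ring
      have := hineq t ht
      linarith [hmono, this, hcalc.symm.le, hcalc.le]
  intro t ht
  have hlim : Tendsto (fun n : ℕ => -(M * (T * K) ^ n * t ^ n / n.factorial)) atTop (𝓝 0) := by
    have heq : (fun n : ℕ => -(M * (T * K) ^ n * t ^ n / n.factorial))
        = fun n : ℕ => -(M * ((T * K * t) ^ n / n.factorial)) := by
      funext n; rw [mul_pow]; ring
    rw [heq]
    simpa using ((FloorSemiring.tendsto_pow_div_factorial_atTop (T * K * t)).const_mul M).neg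
  exact le_of_tendsto' hlim (fun n => key n t ht)
end

section
/- Let v : [λ₀, X) → ℝ be C¹, positive on (λ₀, X), with v(λ₀) = 0, satisfying v(x)v'(x) + 3β v(x) = σ²x² - 2β²x + 2β²λ₀. If r : [0,τ) → [λ₀, X) is strictly increasing, C², solves r'' + 3βr' + 2β²r = σ²r² + 2β²λ₀ with r(0)=λ₀, r'(0)=0, and r'(t) > 0 for t > 0, then r'(t) = v(r(t)) for all t ∈ [0,τ), and hence for any a ∈ (λ₀, X), the time to reach level a equals ∫_{λ₀}^a dx/v(x). -/
open Set Topology MeasureTheory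

/-- If v solves the Abel-type ODE v v' + 3βv = σ²x² - 2β²x + 2β²λ₀ on (λ₀,X)
with v(λ₀)=0, v > 0 on (λ₀,X), and r is a strictly increasing solution of
r'' + 3βr' + 2β²r = σ²r² + 2β²λ₀ with values in [λ₀,X), then r' = v ∘ r,
and the time to reach level a equals ∫_{λ₀}^a dx/v(x). -/
theorem stmt16 (β σ lam0 X τ : ℝ) (hβ : 0 ≤ β) (hσ : 0 < σ)
    (hlam0 : 0 < lam0) (hX : lam0 < X) (hτ : 0 < τ)
    (v v' r r' r'' : ℝ → ℝ)
    (hv_cont : ContinuousOn v (Ico lam0 X))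
    (hv' : ∀ x ∈ Ioo lam0 X, HasDerivAt v (v' x) x)
    (hv0 : v lam0 = 0)
    (hv_pos : ∀ x ∈ Ioo lam0 X, 0 < v x)
    (hv_ode : ∀ x ∈ Ioo lam0 X,
      v x * v' x + 3 * β * v x = σ^2 * x^2 - 2 * β^2 * x + 2 * β^2 * lam0)
    (hr_mem : ∀ t ∈ Ico (0:ℝ) τ, r t ∈ Ico lam0 X)
    (hr_mono : StrictMonoOn r (Ico 0 τ))
    (hr : ∀ t ∈ Ico (0:ℝ) τ, HasDerivAt r (r' t) t)
    (hr' : ∀ t ∈ Ico (0:ℝ) τ, HasDerivAt r' (r'' t) t)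
    (hr_ode : ∀ t ∈ Ico (0:ℝ) τ,
      r'' t + 3 * β * r' t + 2 * β^2 * r t = σ^2 * (r t)^2 + 2 * β^2 * lam0)
    (hr0 : r 0 = lam0) (hr'0 : r' 0 = 0)
    (hr'_pos : ∀ t ∈ Ioo (0:ℝ) τ, 0 < r' t) :
    (∀ t ∈ Ico (0:ℝ) τ, r' t = v (r t)) ∧
    (∀ a ∈ Ioo lam0 X, ∀ t ∈ Ico (0:ℝ) τ, r t = a →
      t = ∫ x in lam0..a, 1 / v x) := by
  have h0mem : (0:ℝ) ∈ Ico (0:ℝ) τ := ⟨le_refl 0, hτ⟩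
  -- for t ∈ (0,τ), r t ∈ (lam0, X)
  have hmem' : ∀ t ∈ Ioo (0:ℝ) τ, r t ∈ Ioo lam0 X := by
    intro t ht
    have h1 := hr_mem t ⟨ht.1.le, ht.2⟩
    have h2 : r 0 < r t := hr_mono h0mem ⟨ht.1.le, ht.2⟩ ht.1
    rw [hr0] at h2
    exact ⟨h2, h1.2⟩
  set ψ : ℝ → ℝ := fun t => r' t ^ 2 - v (r t) ^ 2 with hψdef
  set Dψ : ℝ → ℝ := fun t => -(6*β) * (r' t * (r' t - v (r t))) with hDψdef
  have hψd : ∀ t ∈ Ioo (0:ℝ) τ, HasDerivAt ψ (Dψ t) t := by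
    intro t ht
    have htI : t ∈ Ico (0:ℝ) τ := ⟨ht.1.le, ht.2⟩
    have h1 : HasDerivAt (fun s => r' s ^ 2) ((2:ℕ) * r' t ^ 1 * r'' t) t :=
      (hr' t htI).pow 2
    have h2 : HasDerivAt (fun s => v (r s)) (v' (r t) * r' t) t :=
      (hv' (r t) (hmem' t ht)).comp t (hr t htI)
    have h3 : HasDerivAt (fun s => v (r s) ^ 2) ((2:ℕ) * v (r t) ^ 1 * (v' (r t) * r' t)) t :=
      h2.pow 2
    have h4 := h1.sub h3
    refine h4.congr_deriv ?_
    symm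
    have e1 := hr_ode t htI
    have e2 := hv_ode (r t) (hmem' t ht)
    push_cast
    linear_combination (2 * r' t) * e2 - (2 * r' t) * e1
  have hr'cont : ContinuousOn r' (Ico 0 τ) :=
    fun t ht => (hr' t ht).continuousAt.continuousWithinAt
  have hrcont : ContinuousOn r (Ico 0 τ) :=
    fun t ht => (hr t ht).continuousAt.continuousWithinAt
  have hψcont : ContinuousOn ψ (Ico 0 τ) := by
    apply ContinuousOn.sub
    · exact hr'cont.pow 2
    · exact (hv_cont.comp hrcont hr_mem).pow 2
  have hψ0 : ψ 0 = 0 := by simp [hψdef, hr'0, hr0, hv0]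
  -- Part 1
  have key : ∀ t ∈ Ico (0:ℝ) τ, r' t = v (r t) := by
    intro t ht
    rcases eq_or_lt_of_le ht.1 with h0 | h0
    · rw [← h0, hr'0, hr0, hv0]
    have htτ : t < τ := ht.2
    -- Gronwall bound from ε to t
    have bound : ∀ ε ∈ Ioc (0:ℝ) t, |ψ t| ≤ |ψ ε| * Real.exp (6*β*t) := by
      intro ε hε
      have hεt : ε ≤ t := hε.2
      have hsub : Icc ε t ⊆ Ioo 0 τ := fun x hx => ⟨lt_of_lt_of_le hε.1 hx.1,
        lt_of_le_of_lt hx.2 htτ⟩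
      have hG := norm_le_gronwallBound_of_norm_deriv_right_le
        (f := ψ) (f' := Dψ) (δ := ‖ψ ε‖) (K := 6*β) (ε := 0) (a := ε) (b := t)
        (hψcont.mono (fun x hx => ⟨le_trans hε.1.le hx.1, lt_of_le_of_lt hx.2 htτ⟩))
        (fun x hx => (hψd x (hsub ⟨hx.1, hx.2.le⟩)).hasDerivWithinAt)
        le_rfl ?_ t ⟨hεt, le_refl t⟩
      · rw [gronwallBound_ε0] at hG
        calc |ψ t| ≤ ‖ψ ε‖ * Real.exp (6*β*(t-ε)) := hG
        _ ≤ |ψ ε| * Real.exp (6*β*t) := by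
            rw [Real.norm_eq_abs]
            apply mul_le_mul_of_nonneg_left _ (abs_nonneg _)
            apply Real.exp_le_exp.2
            nlinarith [hε.1, hβ]
      · intro x hx
        have hxm : x ∈ Ioo (0:ℝ) τ := hsub ⟨hx.1, hx.2.le⟩
        have hp : 0 < r' x := hr'_pos x hxm
        have hq : 0 < v (r x) := hv_pos (r x) (hmem' x hxm)
        rw [Real.norm_eq_abs, Real.norm_eq_abs, add_zero]
        have h1 : |Dψ x| = 6*β * (r' x * |r' x - v (r x)|) := by
          have e : Dψ x = -(6*β) * (r' x * (r' x - v (r x))) := rfl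
          rw [e, abs_mul, abs_mul, abs_neg, abs_of_nonneg (by positivity : (0:ℝ) ≤ 6*β),
            abs_of_pos hp]
        have h2 : |ψ x| = |r' x - v (r x)| * (r' x + v (r x)) := by
          have e : ψ x = (r' x - v (r x)) * (r' x + v (r x)) := by
            show r' x ^ 2 - v (r x) ^ 2 = _
            ring
          rw [e, abs_mul, abs_of_pos (show (0:ℝ) < r' x + v (r x) by linarith)]
        rw [h1, h2]
        nlinarith [mul_nonneg (mul_nonneg hβ (abs_nonneg (r' x - v (r x)))) hq.le]
    -- take ε → 0⁺
    have hψt : ψ t = 0 := by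
      have hIoc : Ioc (0:ℝ) t ∈ 𝓝[>] (0:ℝ) := Ioc_mem_nhdsGT_of_mem ⟨le_refl 0, h0⟩
      have htend : Filter.Tendsto (fun ε => |ψ ε| * Real.exp (6*β*t)) (𝓝[>] (0:ℝ))
          (𝓝 (|ψ 0| * Real.exp (6*β*t))) := by
        apply Filter.Tendsto.mul_const
        apply Filter.Tendsto.abs
        have hc : Filter.Tendsto ψ (𝓝[Ico 0 τ] 0) (𝓝 (ψ 0)) := hψcont 0 h0mem
        apply hc.mono_left
        apply le_trans (nhdsWithin_le_of_mem hIoc)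
        exact nhdsWithin_mono 0 (fun x hx => ⟨hx.1.le, lt_of_le_of_lt hx.2 htτ⟩)
      rw [hψ0] at htend
      simp only [abs_zero, zero_mul] at htend
      have hle : |ψ t| ≤ 0 := by
        apply ge_of_tendsto htend
        filter_upwards [hIoc] with ε hε
        exact bound ε hε
      exact abs_nonpos_iff.1 hle
    have hp : 0 < r' t := hr'_pos t ⟨h0, htτ⟩
    have hq : 0 < v (r t) := hv_pos (r t) (hmem' t ⟨h0, htτ⟩)
    have hψt' : r' t ^ 2 - v (r t) ^ 2 = 0 := hψt
    have hfac : (r' t - v (r t)) * (r' t + v (r t)) = 0 := by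
      linear_combination hψt'
    rcases mul_eq_zero.1 hfac with h | h
    · linarith
    · linarith
  refine ⟨key, ?_⟩
  -- Part 2
  intro a ha t ht hrt
  have h0t : 0 < t := by
    rcases eq_or_lt_of_le ht.1 with h0 | h0
    · exfalso; rw [← h0, hr0] at hrt; exact absurd hrt.symm (ne_of_gt ha.1)
    · exact h0
  have htτ : t < τ := ht.2
  have hIocsub : Ioc lam0 a ⊆ Ico lam0 X := fun x hx => ⟨hx.1.le, lt_of_le_of_lt hx.2 ha.2⟩
  have contOn_invv : ContinuousOn (fun x => 1 / v x) (Ioc lam0 a) := by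
    apply ContinuousOn.div continuousOn_const (hv_cont.mono hIocsub)
    intro x hx
    exact ne_of_gt (hv_pos x ⟨hx.1, lt_of_le_of_lt hx.2 ha.2⟩)
  have hmonoOn := hr_mono.monotoneOn
  -- substitution on [s,t]
  have subst : ∀ s ∈ Ioo (0:ℝ) t, ∫ x in Ioc (r s) a, 1 / v x = t - s := by
    intro s hs
    have hst : s ≤ t := hs.2.le
    have huIcc : uIcc s t = Icc s t := uIcc_of_le hst
    have hIccsub : Icc s t ⊆ Ico (0:ℝ) τ := fun x hx =>
      ⟨le_trans hs.1.le hx.1, lt_of_le_of_lt hx.2 htτ⟩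
    have hIccsub' : Icc s t ⊆ Ioo (0:ℝ) τ := fun x hx =>
      ⟨lt_of_lt_of_le hs.1 hx.1, lt_of_le_of_lt hx.2 htτ⟩
    have himg : r '' uIcc s t ⊆ Ioc lam0 a := by
      rw [huIcc]
      rintro y ⟨x, hx, rfl⟩
      constructor
      · exact (hmem' x (hIccsub' hx)).1
      · rw [← hrt]
        exact hmonoOn (hIccsub hx) ht hx.2
    have hsub := intervalIntegral.integral_comp_smul_deriv'
      (f := r) (f' := r') (g := fun x => 1 / v x) (a := s) (b := t)
      (fun x hx => hr x (hIccsub (huIcc ▸ hx)))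
      (hr'cont.mono (fun x hx => hIccsub (huIcc ▸ hx)))
      (contOn_invv.mono himg)
    have hone : ∫ x in s..t, r' x • (fun x => 1 / v x) (r x) = t - s := by
      have : EqOn (fun x => r' x • (fun x => 1 / v x) (r x)) (fun _ => (1:ℝ)) (uIcc s t) := by
        intro x hx
        rw [huIcc] at hx
        have hxm : x ∈ Ioo (0:ℝ) τ := hIccsub' hx
        have hq : 0 < v (r x) := hv_pos (r x) (hmem' x hxm)
        have hk : r' x = v (r x) := key x (hIccsub hx)
        simp only [smul_eq_mul, hk]
        field_simp
      rw [intervalIntegral.integral_congr this]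
      simp
    rw [show (fun x => r' x • (fun x => 1 / v x) (r x)) = fun x => r' x • ((fun x => 1 / v x) ∘ r) x from rfl] at hone
    rw [hone] at hsub
    have hrs_lt : r s < a := by
      rw [← hrt]
      exact hr_mono (hIccsub ⟨le_refl s, hst⟩) ht hs.2
    rw [hrt, intervalIntegral.integral_of_le hrs_lt.le] at hsub
    exact hsub.symm
  -- sequence s n = t/(n+2) ↓ 0
  set s : ℕ → ℝ := fun n => t / (n + 2) with hsdef
  have hs_pos : ∀ n, 0 < s n := fun n => by positivity
  have hs_lt : ∀ n, s n < t := by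
    intro n
    apply div_lt_self h0t
    have : (0:ℝ) ≤ (n:ℝ) := Nat.cast_nonneg n
    linarith
  have hs_mem : ∀ n, s n ∈ Ioo (0:ℝ) t := fun n => ⟨hs_pos n, hs_lt n⟩
  have hs_anti : Antitone s := by
    intro m n hmn
    have hb : (0:ℝ) < (m:ℝ) + 2 := by positivity
    have hbc : (m:ℝ) + 2 ≤ (n:ℝ) + 2 := by
      have : (m:ℝ) ≤ (n:ℝ) := by exact_mod_cast hmn
      linarith
    exact div_le_div_of_nonneg_left h0t.le hb hbc
  have hs_tendsto : Filter.Tendsto s Filter.atTop (𝓝 0) := by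
    have h2 : Filter.Tendsto (fun n : ℕ => ((n:ℝ) + 2)) Filter.atTop Filter.atTop :=
      Filter.tendsto_atTop_add_const_right _ 2 tendsto_natCast_atTop_atTop
    have h3 : Filter.Tendsto (fun n : ℕ => t / ((n:ℝ) + 2)) Filter.atTop (𝓝 0) :=
      Filter.Tendsto.div_atTop tendsto_const_nhds h2
    exact h3
  have hrs_tendsto : Filter.Tendsto (fun n => r (s n)) Filter.atTop (𝓝 lam0) := by
    have := ((hr 0 h0mem).continuousAt.tendsto).comp hs_tendsto
    rwa [hr0] at this
  set A : ℕ → Set ℝ := fun n => Ioc (r (s n)) a with hAdef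
  have hsIco : ∀ n, s n ∈ Ico (0:ℝ) τ := fun n =>
    ⟨(hs_pos n).le, lt_trans (hs_lt n) htτ⟩
  have hA_mono : Monotone A := by
    intro m n hmn
    apply Ioc_subset_Ioc_left
    exact hmonoOn (hsIco n) (hsIco m) (hs_anti hmn)
  have hA_sub : ∀ n, A n ⊆ Ioc lam0 a := by
    intro n
    apply Ioc_subset_Ioc_left
    exact ((hmem' (s n) ⟨hs_pos n, lt_trans (hs_lt n) htτ⟩).1).le
  have hA_union : ⋃ n, A n = Ioc lam0 a := by
    apply Subset.antisymm
    · exact iUnion_subset hA_sub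
    · intro x hx
      have : ∀ᶠ n in Filter.atTop, r (s n) < x :=
        hrs_tendsto.eventually_lt_const hx.1
      rcases this.exists with ⟨n, hn⟩
      exact mem_iUnion.2 ⟨n, hn, hx.2⟩
  set g : ℝ → ENNReal := fun x => ENNReal.ofReal (1 / v x) with hgdef
  -- lintegral over A n
  have hInt_n : ∀ n, IntegrableOn (fun x => 1 / v x) (A n) := by
    intro n
    have h1 : Icc (r (s n)) a ⊆ Ioc lam0 a := fun x hx =>
      ⟨lt_of_lt_of_le (hmem' (s n) ⟨hs_pos n, lt_trans (hs_lt n) htτ⟩).1 hx.1, hx.2⟩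
    exact ((contOn_invv.mono h1).integrableOn_Icc).mono_set Ioc_subset_Icc_self
  have h_nn : ∀ n, (0:ℝ → ℝ) ≤ᵐ[MeasureTheory.volume.restrict (A n)] fun x => 1 / v x := by
    intro n
    filter_upwards [MeasureTheory.ae_restrict_mem measurableSet_Ioc] with x hx
    have hx' := hA_sub n hx
    have := hv_pos x ⟨hx'.1, lt_of_le_of_lt hx'.2 ha.2⟩
    positivity
  have hlint_n : ∀ n, ∫⁻ x in A n, g x = ENNReal.ofReal (t - s n) := by
    intro n
    rw [← MeasureTheory.ofReal_integral_eq_lintegral_ofReal (hInt_n n) (h_nn n)]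
    rw [subst (s n) (hs_mem n)]
  -- lintegral over the union
  have hlint : ∫⁻ x in Ioc lam0 a, g x = ENNReal.ofReal t := by
    set f : ℕ → ℝ → ENNReal := fun n => (A n).indicator g with hfdef
    have hfm : ∀ n, AEMeasurable (f n) MeasureTheory.volume := by
      intro n
      rw [hfdef]
      apply (aemeasurable_indicator_iff measurableSet_Ioc).2
      exact (ENNReal.continuous_ofReal.comp_continuousOn
        (contOn_invv.mono (hA_sub n))).aemeasurable measurableSet_Ioc
    have hf_mono : ∀ x, Monotone fun n => f n x := by
      intro x m n hmn
      exact Set.indicator_le_indicator_of_subset (hA_mono hmn) (fun _ => zero_le) x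
    have hsup : ∀ x, (⨆ n, f n x) = (Ioc lam0 a).indicator g x := by
      intro x
      rw [← hA_union]
      by_cases hx : x ∈ ⋃ n, A n
      · rcases mem_iUnion.1 hx with ⟨n, hn⟩
        rw [indicator_of_mem hx]
        apply le_antisymm
        · apply iSup_le
          intro m
          by_cases hm : x ∈ A m
          · rw [hfdef]; simp only [indicator_of_mem hm]; exact le_refl _
          · rw [hfdef]; simp only [indicator_of_notMem hm]; exact zero_le
        · apply le_iSup_of_le n
          rw [hfdef]; simp only [indicator_of_mem hn]; exact le_rfl
      · rw [indicator_of_notMem hx]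
        apply le_antisymm _ zero_le
        apply iSup_le
        intro m
        have hm : x ∉ A m := fun h => hx (mem_iUnion.2 ⟨m, h⟩)
        rw [hfdef]; simp only [indicator_of_notMem hm]; exact le_refl _
    have h1 : ∫⁻ x, (Ioc lam0 a).indicator g x = ∫⁻ x in Ioc lam0 a, g x :=
      MeasureTheory.lintegral_indicator measurableSet_Ioc g
    rw [← h1]
    have h2 : ∫⁻ x, (Ioc lam0 a).indicator g x = ∫⁻ x, ⨆ n, f n x := by
      congr 1; funext x; rw [hsup x]
    rw [h2, MeasureTheory.lintegral_iSup' hfm (Filter.Eventually.of_forall hf_mono)]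
    have h3 : ∀ n, ∫⁻ x, f n x = ENNReal.ofReal (t - s n) := by
      intro n
      rw [hfdef]
      simp only
      rw [MeasureTheory.lintegral_indicator measurableSet_Ioc g]
      exact hlint_n n
    simp_rw [h3]
    -- iSup of ofReal (t - s n) = ofReal t
    have hmono2 : Monotone fun n => ENNReal.ofReal (t - s n) := by
      intro m n hmn
      exact ENNReal.ofReal_le_ofReal (by linarith [hs_anti hmn])
    have htend2 : Filter.Tendsto (fun n => ENNReal.ofReal (t - s n)) Filter.atTop
        (𝓝 (ENNReal.ofReal t)) := by
      apply ENNReal.tendsto_ofReal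
      have : Filter.Tendsto (fun n => t - s n) Filter.atTop (𝓝 (t - 0)) :=
        (tendsto_const_nhds).sub hs_tendsto
      simpa using this
    exact tendsto_nhds_unique (tendsto_atTop_iSup hmono2) htend2
  -- integrability on (lam0, a]
  have hmeas : MeasureTheory.AEStronglyMeasurable (fun x => 1 / v x)
      (MeasureTheory.volume.restrict (Ioc lam0 a)) :=
    (contOn_invv.aemeasurable measurableSet_Ioc).aestronglyMeasurable
  have h_nn' : (0:ℝ → ℝ) ≤ᵐ[MeasureTheory.volume.restrict (Ioc lam0 a)] fun x => 1 / v x := by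
    filter_upwards [MeasureTheory.ae_restrict_mem measurableSet_Ioc] with x hx
    have := hv_pos x ⟨hx.1, lt_of_le_of_lt hx.2 ha.2⟩
    positivity
  have hval : ∫ x in Ioc lam0 a, 1 / v x = t := by
    rw [MeasureTheory.integral_eq_lintegral_of_nonneg_ae h_nn' hmeas]
    rw [show (fun x => ENNReal.ofReal (1 / v x)) = g from rfl] at *
    rw [hlint]
    exact ENNReal.toReal_ofReal h0t.le
  rw [intervalIntegral.integral_of_le (le_of_lt (lt_of_lt_of_le ha.1 le_rfl))]
  exact hval.symm
end
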